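/- (Ruzsa covering step) Let A be a finite symmetric non-empty subset of an abelian group G with |4A| ≤ C|A|. Then there exists a set X ⊆ 3A with |X| ≤ C such that kA ⊆ 2A + (k-2)X for all integers k ≥ 2. -/

import Mathlib

/-!
Take `X ⊆ 3A` indexing a maximal family of disjoint translates `x + A`. Ruzsa's covering lemma
gives `|X| ≤ |3A + A| / |A| ≤ C` and `3A ⊆ X + (A - A) = 2A + X`, the last step by symmetry of `A`.
Adding `A` repeatedly and absorbing each new `3A` with this inclusion gives
`(m + 2)A ⊆ 2A + mX`.
-/

open scoped Pointwise

/-- The `k`-fold iterated sumset `kA = {a₁ + ⋯ + a_k : aᵢ ∈ A}` of a finite set in an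
abelian group (with `0A = {0}`). -/
def iterSumset {G : Type*} [AddCommGroup G] [DecidableEq G] (A : Finset G) : ℕ → Finset G
  | 0 => {0}
  | k + 1 => iterSumset A k + A

section

variable {G : Type*} [AddCommGroup G] [DecidableEq G]

theorem iterSumset_eq_nsmul (A : Finset G) (k : ℕ) : iterSumset A k = k • A := by
  induction k with
  | zero => rfl
  | succ k ih => rw [iterSumset, ih, succ_nsmul]

namespace Finset

theorem add_nsmul_subset_add_nsmul {A B X : Finset G} (h : B + A ⊆ B + X) (n : ℕ) :
    B + n • A ⊆ B + n • X := by
  induction n with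
  | zero => rfl
  | succ n ih =>
    calc B + (n + 1) • A = (B + n • A) + A := by rw [succ_nsmul, add_assoc]
      _ ⊆ (B + n • X) + A := add_subset_add_right ih
      _ = (B + A) + n • X := by abel
      _ ⊆ (B + X) + n • X := add_subset_add_right h
      _ = B + (n + 1) • X := by rw [succ_nsmul, add_comm (n • X), add_assoc]

theorem sub_self_eq_add_self_of_neg_eq {A : Finset G} (hsym : -A = A) : A - A = A + A := by
  rw [sub_eq_add_neg, hsym]

end Finset

end

open Finset in
/-- Ruzsa covering step: if `A` is symmetric, non-empty and `|4A| ≤ C|A|`, then there is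
`X ⊆ 3A` with `|X| ≤ C` such that `kA ⊆ 2A + (k-2)X` for all `k ≥ 2`. -/
theorem ruzsa_covering_step {G : Type*} [AddCommGroup G] [DecidableEq G]
    (A : Finset G) (hA : A.Nonempty) (hsym : -A = A) (C : ℝ)
    (h4 : ((iterSumset A 4).card : ℝ) ≤ C * A.card) :
    ∃ X : Finset G, X ⊆ iterSumset A 3 ∧ (X.card : ℝ) ≤ C ∧
      ∀ k : ℕ, 2 ≤ k → iterSumset A k ⊆ iterSumset A 2 + iterSumset X (k - 2) := by
  simp only [iterSumset_eq_nsmul] at h4 ⊢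
  rw [show (4 : ℕ) = 3 + 1 from rfl, succ_nsmul] at h4
  obtain ⟨X, hX3, hXC, hcover⟩ := ruzsa_covering_add hA h4
  have h3A : 2 • A + A ⊆ 2 • A + X := by
    rw [← succ_nsmul, add_comm (2 • A), two_nsmul, ← sub_self_eq_add_self_of_neg_eq hsym]
    exact hcover
  refine ⟨X, hX3, hXC, fun k hk => ?_⟩
  obtain ⟨m, rfl⟩ := Nat.exists_eq_add_of_le hk
  rw [Nat.add_sub_cancel_left, add_nsmul]
  exact add_nsmul_subset_add_nsmul h3A m
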